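/- The regular Turán graph T(N,t) (t ∣ N) satisfies χ^FAT(T(N,t)) = max{t, N/t}. -/

import Mathlib

open Finset
open scoped Classical

/-- A FAT `k`-coloring of `G`. -/
def IsFATColoring {V : Type*} [Fintype V] (G : SimpleGraph V) (k : ℕ)
    (c : V → Fin k) (α : ℝ) : Prop :=
  Function.Surjective c ∧ 0 ≤ α ∧ α ≤ 1 ∧
    ∀ v : V, ∀ i : Fin k,
      ((((G.neighborFinset v).filter (fun w => c w = i)).card : ℝ)) =
        (if c v = i then 1 - ((k : ℝ) - 1) * α else α) * (G.degree v : ℝ)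

/-- The FAT chromatic number: the largest `k` such that `G` admits a FAT `k`-coloring. -/
noncomputable def fatChromatic {V : Type*} [Fintype V] (G : SimpleGraph V) : ℕ :=
  sSup {k | ∃ c : V → Fin k, ∃ α : ℝ, IsFATColoring G k c α}

/-- The regular Turán graph with `t` parts of size `n`: vertices `(g, x) : Fin t × Fin n`,
adjacent iff they lie in different parts (different first coordinates).
The part `P_g` is `{a | a.1 = g}`. -/
def regTuran (t n : ℕ) : SimpleGraph (Fin t × Fin n) :=
  SimpleGraph.fromRel (fun a b => a.1 ≠ b.1)

lemma regTuran_adj {t n : ℕ} (v w : Fin t × Fin n) :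
    (regTuran t n).Adj v w ↔ v.1 ≠ w.1 := by
  simp only [regTuran, SimpleGraph.fromRel_adj]
  constructor
  · rintro ⟨-, h | h⟩
    · exact h
    · exact h.symm
  · intro h; exact ⟨fun he => h (congrArg Prod.fst he), Or.inl h⟩

lemma regTuran_nbhd {t n : ℕ} (v : Fin t × Fin n) :
    (regTuran t n).neighborFinset v = univ.filter (fun w => w.1 ≠ v.1) := by
  ext w
  simp [SimpleGraph.mem_neighborFinset, regTuran_adj, ne_comm]

lemma filter_fst_ne {t n : ℕ} (g : Fin t) :
    (univ.filter (fun w : Fin t × Fin n => w.1 ≠ g)) = (univ.erase g) ×ˢ univ := by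
  ext w; simp [and_comm]

lemma regTuran_degree {t n : ℕ} (v : Fin t × Fin n) :
    (regTuran t n).degree v = (t-1)*n := by
  rw [← SimpleGraph.card_neighborFinset_eq_degree, regTuran_nbhd, filter_fst_ne,
    card_product, card_erase_of_mem (mem_univ _)]
  simp

lemma regTuran_filter_count {t n k : ℕ} (c : Fin t × Fin n → Fin k)
    (v : Fin t × Fin n) (i : Fin k) :
    ((regTuran t n).neighborFinset v).filter (fun w => c w = i)
      = univ.filter (fun w => w.1 ≠ v.1 ∧ c w = i) := by
  rw [regTuran_nbhd, filter_filter]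

-- count for balanced coloring
lemma count_balanced {t n : ℕ} (g : Fin t) (i : Fin n) :
    (univ.filter (fun w : Fin t × Fin n => w.1 ≠ g ∧ w.2 = i)).card = t - 1 := by
  have : (univ.filter (fun w : Fin t × Fin n => w.1 ≠ g ∧ w.2 = i))
      = (univ.erase g) ×ˢ {i} := by
    ext w
    simp only [mem_filter, mem_univ, true_and, mem_product, mem_erase, mem_singleton]
    tauto
  rw [this, card_product, card_erase_of_mem (mem_univ _)]
  simp

lemma count_mono_same {t n : ℕ} (g : Fin t) :
    (univ.filter (fun w : Fin t × Fin n => w.1 ≠ g ∧ w.1 = g)).card = 0 := by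
  simp [filter_eq_empty_iff]

lemma count_mono_other {t n : ℕ} (g i : Fin t) (hig : i ≠ g) :
    (univ.filter (fun w : Fin t × Fin n => w.1 ≠ g ∧ w.1 = i)).card = n := by
  have : (univ.filter (fun w : Fin t × Fin n => w.1 ≠ g ∧ w.1 = i))
      = {i} ×ˢ univ := by
    ext w
    simp only [mem_filter, mem_univ, true_and, mem_product, mem_singleton, and_true]
    constructor
    · rintro ⟨-, h⟩; exact h
    · rintro h; exact ⟨h ▸ hig, h⟩
  rw [this, card_product]; simp

set_option maxHeartbeats 1000000 in
theorem fat_turan' (t n : ℕ) (ht : 0 < t) (hn0 : 0 < n) :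
    sSup {k | ∃ c : Fin t × Fin n → Fin k, ∃ α : ℝ, IsFATColoring (regTuran t n) k c α}
      = max t n := by
  have htR : (1:ℝ) ≤ t := by exact_mod_cast ht
  have hnR : (1:ℝ) ≤ n := by exact_mod_cast hn0
  have hcast_t : ((t-1 : ℕ) : ℝ) = (t:ℝ) - 1 := by
    push_cast [Nat.cast_sub ht]; ring
  -- membership
  have hmem : max t n ∈ {k | ∃ c : Fin t × Fin n → Fin k, ∃ α : ℝ,
      IsFATColoring (regTuran t n) k c α} := by
    rcases le_total t n with hle | hle
    · rw [max_eq_right hle]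
      refine ⟨fun v => v.2, 1/(n:ℝ), ?_, by positivity, ?_, ?_⟩
      · intro i; exact ⟨(⟨0, ht⟩, i), rfl⟩
      · rw [div_le_one (by positivity)]; exact hnR
      · intro v i
        rw [regTuran_filter_count, count_balanced, regTuran_degree]
        have hne : (n:ℝ) ≠ 0 := by positivity
        push_cast [hcast_t]
        split <;> field_simp <;> ring
    · rw [max_eq_left hle]
      by_cases ht1 : t = 1
      · subst ht1
        have hn1 : n = 1 := le_antisymm hle hn0
        subst hn1
        refine ⟨fun v => v.1, 0, ?_, le_refl _, zero_le_one, ?_⟩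
        · intro i; exact ⟨(i, ⟨0, one_pos⟩), rfl⟩
        · intro v i
          rw [regTuran_filter_count, regTuran_degree]
          have : (univ.filter (fun w : Fin 1 × Fin 1 => w.1 ≠ v.1 ∧ w.1 = i)).card = 0 := by
            rw [card_eq_zero, filter_eq_empty_iff]
            intro x _ hx
            exact hx.1 (Subsingleton.elim x.1 v.1)
          rw [this]
          simp
      · have ht2 : 2 ≤ t := by omega
        have htR2 : (2:ℝ) ≤ t := by exact_mod_cast ht2
        have htm1 : (0:ℝ) < (t:ℝ) - 1 := by linarith
        refine ⟨fun v => v.1, 1/((t:ℝ)-1), ?_, by positivity, ?_, ?_⟩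
        · intro i; exact ⟨(i, ⟨0, hn0⟩), rfl⟩
        · rw [div_le_one htm1]; linarith
        · intro v i
          rw [regTuran_filter_count, regTuran_degree]
          by_cases hiv : v.1 = i
          · subst hiv
            rw [count_mono_same, if_pos rfl]
            push_cast [hcast_t]
            field_simp
            ring
          · rw [count_mono_other v.1 i (Ne.symm hiv), if_neg hiv]
            push_cast [hcast_t]
            field_simp
  -- upper bound
  have hub : ∀ k ∈ {k | ∃ c : Fin t × Fin n → Fin k, ∃ α : ℝ,
      IsFATColoring (regTuran t n) k c α}, k ≤ max t n := by
    rintro k ⟨c, α, hsurj, h0, h1, hcond⟩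
    have hk0 : 0 < k := Fin.pos (c (⟨0, ht⟩, ⟨0, hn0⟩))
    by_cases hconst : ∀ v w : Fin t × Fin n, v.1 = w.1 → c v = c w
    · -- monochromatic parts: k ≤ t
      have hf : Function.Surjective (fun g : Fin t => c (g, ⟨0, hn0⟩)) := by
        intro i
        obtain ⟨v, hv⟩ := hsurj i
        exact ⟨v.1, (hconst (v.1, ⟨0, hn0⟩) v rfl).trans hv⟩
      have := Fintype.card_le_of_surjective _ hf
      simp only [Fintype.card_fin] at this
      exact le_trans this (le_max_left _ _)
    · push_neg at hconst
      obtain ⟨v, w, hvw, hcne⟩ := hconst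
      by_cases ht1 : t = 1
      · -- t = 1: k ≤ n by surjectivity
        have := Fintype.card_le_of_surjective _ hsurj
        simp only [Fintype.card_fin, Fintype.card_prod, ht1] at this
        simpa using le_trans (by simpa using this) (le_max_right t n)
      · have ht2 : 2 ≤ t := by omega
        have htR2 : (2:ℝ) ≤ t := by exact_mod_cast ht2
        have htm1 : (0:ℝ) < (t:ℝ) - 1 := by linarith
        have hd : (0:ℝ) < ((t-1)*n : ℕ) := by
          push_cast [hcast_t]
          have : (0:ℝ) < n := by linarith
          positivity
        -- from the mixed part: k * α = 1
        have hkα : (k:ℝ) * α = 1 := by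
          have h1' := hcond v (c v)
          have h2' := hcond w (c v)
          rw [regTuran_filter_count, regTuran_degree, if_pos rfl] at h1'
          rw [regTuran_filter_count, regTuran_degree, if_neg (fun h => hcne h.symm)] at h2'
          rw [hvw] at h1'
          rw [h2'] at h1'
          have := mul_right_cancel₀ (ne_of_gt hd) h1'.symm
          nlinarith [this]
        -- so every off-part count is α * d
        have hAll : ∀ (g : Fin t) (i : Fin k),
            ((univ.filter (fun u : Fin t × Fin n => u.1 ≠ g ∧ c u = i)).card : ℝ)
              = α * ((t-1)*n : ℕ) := by
          intro g i
          have h' := hcond (g, ⟨0, hn0⟩) i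
          rw [regTuran_filter_count, regTuran_degree] at h'
          rw [h']
          congr 1
          split
          · linarith [hkα]
          · rfl
        -- fix color i0
        set i0 := c v with hi0
        set C := univ.filter (fun u : Fin t × Fin n => c u = i0) with hC
        have hsplit : ∀ g : Fin t,
            ((C.filter (fun u => u.1 = g)).card : ℝ) = (C.card : ℝ) - α * ((t-1)*n : ℕ) := by
          intro g
          have hpart : (C.filter (fun u => u.1 = g)).card
              + (C.filter (fun u => ¬ u.1 = g)).card = C.card :=
            card_filter_add_card_filter_not _
          have heq : C.filter (fun u => ¬ u.1 = g)
              = univ.filter (fun u : Fin t × Fin n => u.1 ≠ g ∧ c u = i0) := by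
            rw [hC, filter_filter]
            apply filter_congr
            intro x _
            tauto
          have := hAll g i0
          rw [← heq] at this
          have hcast : ((C.filter (fun u => u.1 = g)).card : ℝ)
              + ((C.filter (fun u => ¬ u.1 = g)).card : ℝ) = (C.card : ℝ) := by
            exact_mod_cast hpart
          linarith [hcast, this]
        have hfiber : (C.card : ℝ) = ∑ g : Fin t, ((C.filter (fun u => u.1 = g)).card : ℝ) := by
          rw [← Nat.cast_sum]
          congr 1
          exact card_eq_sum_card_fiberwise (fun u _ => mem_univ u.1)
        rw [Finset.sum_congr rfl (fun g _ => hsplit g)] at hfiber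
        rw [Finset.sum_const, card_univ, Fintype.card_fin, nsmul_eq_mul] at hfiber
        -- (t-1) * C.card = t * α * d
        have hCcard : (C.card : ℝ) = (t:ℝ) * α * n := by
          push_cast [hcast_t] at hfiber ⊢
          have : ((t:ℝ) - 1) * (C.card : ℝ) = (t:ℝ) * (α * (((t:ℝ)-1) * n)) := by nlinarith [hfiber]
          have h2 : (C.card : ℝ) * ((t:ℝ)-1) = ((t:ℝ) * α * n) * ((t:ℝ)-1) := by nlinarith [this]
          exact mul_right_cancel₀ (ne_of_gt htm1) h2
        -- fiber count = α n = n / k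
        have hB : ((C.filter (fun u => u.1 = v.1)).card : ℝ) = α * n := by
          have := hsplit v.1
          rw [hCcard] at this
          push_cast [hcast_t] at this
          rw [this]; ring
        have hkB : (k:ℝ) * ((C.filter (fun u => u.1 = v.1)).card : ℝ) = n := by
          rw [hB]
          nlinarith [hkα]
        have hkBnat : k * (C.filter (fun u => u.1 = v.1)).card = n := by
          exact_mod_cast hkB
        have hBpos : 0 < (C.filter (fun u => u.1 = v.1)).card := by
          rcases Nat.eq_zero_or_pos (C.filter (fun u => u.1 = v.1)).card with h | h
          · rw [h, Nat.mul_zero] at hkBnat; omega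
          · exact h
        have : k ≤ n := by
          calc k = k * 1 := (Nat.mul_one k).symm
          _ ≤ k * (C.filter (fun u => u.1 = v.1)).card := Nat.mul_le_mul_left k hBpos
          _ = n := hkBnat
        exact le_trans this (le_max_right _ _)
  exact le_antisymm (csSup_le ⟨max t n, hmem⟩ hub) (le_csSup ⟨max t n, hub⟩ hmem)

theorem fat_turan (N t : ℕ) (ht : 0 < t) (hN : 0 < N) (hdvd : t ∣ N) :
    fatChromatic (regTuran t (N / t)) = max t (N / t) := by
  have hn0 : 0 < N / t := Nat.div_pos (Nat.le_of_dvd hN hdvd) ht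
  exact fat_turan' t (N / t) ht hn0
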